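/- arXiv:math/0702580 — 6 statements merged into one kernel-verified Lean document; each statement's English description precedes it below -/
import Mathlib

section
/- Let A be an abelian group and suppose that for every integer n ≥ 1 there are additive endomorphisms F_n, V_n : A → A such that F_n ∘ V_n = n · id_A for all n ≥ 1, and such that for every x ∈ A there exists an integer N with F_m(x) = 0 for all m ≥ N. If A is finitely generated as an abelian group, then A is the trivial group. -/
/-- Farrell's trick (algebraic core of Theorem 1.1): an abelian group with
Frobenius/Verschiebung operators satisfying `F_n ∘ V_n = n • id` and eventual
vanishing of the Frobenii on each element is trivial if finitely generated. -/
theorem stmt_0 (A : Type*) [AddCommGroup A] (F V : ℕ → A →+ A)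
    (hFV : ∀ n : ℕ, 1 ≤ n → ∀ x : A, F n (V n x) = n • x)
    (hvan : ∀ x : A, ∃ N : ℕ, ∀ m : ℕ, N ≤ m → F m x = 0)
    (hfg : AddGroup.FG A) :
    ∀ x : A, x = 0 := by
  obtain ⟨S, hS⟩ := hfg
  choose N hN using hvan
  set M : ℕ := max 1 (S.sup N) with hM
  have hker : ∀ m : ℕ, M ≤ m → ∀ x : A, F m x = 0 := by
    intro m hm x
    have hx : x ∈ AddSubgroup.closure (S : Set A) := by
      rw [hS]; exact AddSubgroup.mem_top x
    induction hx using AddSubgroup.closure_induction with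
    | mem g hg =>
        exact hN g m (le_trans (le_trans (Finset.le_sup hg) (le_max_right _ _)) hm)
    | zero => simp
    | add a b _ _ ha hb => rw [map_add, ha, hb, add_zero]
    | neg a _ ha => rw [map_neg, ha, neg_zero]
  intro x
  have h1 : M • x = 0 := by
    rw [← hFV M (le_max_left _ _) x, hker M le_rfl]
  have h2 : (M + 1) • x = 0 := by
    rw [← hFV (M + 1) (by omega) x, hker (M + 1) (by omega)]
  have := h2
  rw [add_smul, one_smul, h1, zero_add] at this
  exact this
end

section
/- Let A be an abelian group and suppose that for every integer n ≥ 1 there are additive endomorphisms F_n, V_n : A → A such that F_n ∘ V_n = n · id_A for all n ≥ 1, and such that for every x ∈ A there exists an integer N with F_m(x) = 0 for all m ≥ N. Then for every prime p, if the p-primary torsion subgroup {x ∈ A : p^k · x = 0 for some k ≥ 0} of A is finitely generated as an abelian group, then it is trivial. -/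
/-!
Every element of the `p`-primary part `T` is killed by all large `n`: since `T` is finitely
generated, a single `N` makes `F m` vanish on all of `T` for `m ≥ N`, and `T` is stable under
each `V n`, so `n • x = F n (V n x) = 0` for `x ∈ T` and `n ≥ N`. Comparing `n = N + 1` and
`n = N + 2` gives `x = 0`.
-/

section

variable {A B : Type*} [AddCommGroup A] [AddCommGroup B]

theorem AddSubgroup.FG.exists_forall_ge_forall_mem_eq_zero {T : AddSubgroup A} (hT : T.FG)
    (F : ℕ → A →+ B) (hvan : ∀ x : A, ∃ N : ℕ, ∀ m : ℕ, N ≤ m → F m x = 0) :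
    ∃ N : ℕ, ∀ m : ℕ, N ≤ m → ∀ x ∈ T, F m x = 0 := by
  obtain ⟨S, rfl⟩ := hT
  choose bound hbound using hvan
  refine ⟨S.sup bound, fun m hm => ?_⟩
  suffices AddSubgroup.closure (S : Set A) ≤ (F m).ker from fun x hx => this hx
  refine (AddSubgroup.closure_le _).2 fun s hs => ?_
  exact hbound s m ((Finset.le_sup hs).trans hm)

theorem AddSubgroup.FG.eq_bot_of_frobenius_verschiebung {T : AddSubgroup A} (hT : T.FG)
    (F V : ℕ → A →+ A) (hFV : ∀ n : ℕ, 1 ≤ n → ∀ x : A, F n (V n x) = n • x)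
    (hvan : ∀ x : A, ∃ N : ℕ, ∀ m : ℕ, N ≤ m → F m x = 0)
    (hVT : ∀ n : ℕ, ∀ x ∈ T, V n x ∈ T) : T = ⊥ := by
  obtain ⟨N, hN⟩ := hT.exists_forall_ge_forall_mem_eq_zero F hvan
  have hsmul : ∀ n : ℕ, N < n → ∀ x ∈ T, n • x = 0 := fun n hn x hx => by
    rw [← hFV n (by omega) x]
    exact hN n hn.le _ (hVT n x hx)
  refine (AddSubgroup.eq_bot_iff_forall T).2 fun x hx => ?_
  calc x = (N + 1 + 1) • x - (N + 1) • x := by rw [succ_nsmul, add_sub_cancel_left]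
    _ = 0 := by rw [hsmul _ (by omega) x hx, hsmul _ (by omega) x hx, sub_zero]

end

theorem stmt_1_general (A : Type*) [AddCommGroup A] (F V : ℕ → A →+ A)
    (hFV : ∀ n : ℕ, 1 ≤ n → ∀ x : A, F n (V n x) = n • x)
    (hvan : ∀ x : A, ∃ N : ℕ, ∀ m : ℕ, N ≤ m → F m x = 0)
    (p : ℕ)
    (T : AddSubgroup A) (hT : ∀ x : A, x ∈ T ↔ ∃ k : ℕ, p ^ k • x = 0)
    (hfg : T.FG) :
    ∀ x ∈ T, x = 0 := by
  have hVT : ∀ n : ℕ, ∀ x ∈ T, V n x ∈ T := fun n x hx => by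
    obtain ⟨k, hk⟩ := (hT x).1 hx
    exact (hT _).2 ⟨k, by rw [← map_nsmul, hk, map_zero]⟩
  intro x hx
  rw [hfg.eq_bot_of_frobenius_verschiebung F V hFV hvan hVT] at hx
  exact (AddSubgroup.mem_bot).1 hx

/-- The p-primary part of Farrell's trick (Theorem 1.1): under the same
Frobenius/Verschiebung hypotheses, the p-primary torsion subgroup
`{x : A | ∃ k, p ^ k • x = 0}` is trivial whenever it is finitely generated. -/
theorem stmt_1 (A : Type*) [AddCommGroup A] (F V : ℕ → A →+ A)
    (hFV : ∀ n : ℕ, 1 ≤ n → ∀ x : A, F n (V n x) = n • x)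
    (hvan : ∀ x : A, ∃ N : ℕ, ∀ m : ℕ, N ≤ m → F m x = 0)
    (p : ℕ) (hp : p.Prime)
    (T : AddSubgroup A) (hT : ∀ x : A, x ∈ T ↔ ∃ k : ℕ, p ^ k • x = 0)
    (hfg : T.FG) :
    ∀ x ∈ T, x = 0 :=
  stmt_1_general A F V hFV hvan p T hT hfg
end

section
/- Let M be an additive commutative group, f : M → M an additive endomorphism, and n ≥ 1 an integer, and let C_f be the additive endomorphism of Fin n → M defined by (C_f y)(0) = f(y(n−1)) and (C_f y)(i) = y(i−1) for 1 ≤ i ≤ n−1. For every integer k ≥ 0 define σ : Fin n → Fin n by σ(i) = (i − k) mod n and set l_i = (k − i + σ(i))/n (a nonnegative integer). Then for all y and all i one has (C_f^k y)(i) = f^{l_i}(y(σ(i))); moreover σ is a bijection of Fin n and the sum of the l_i over all i ∈ Fin n equals k. -/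
private lemma eq_of_dvd_sub {n a b : ℤ} (hn : 0 < n) (ha : 0 ≤ a) (ha' : a < n)
    (hb : 0 ≤ b) (hb' : b < n) (h : n ∣ a - b) : a = b := by
  rcases h with ⟨c, hc⟩
  have hc0 : c = 0 := by
    rcases lt_trichotomy c 0 with h1 | h1 | h1
    · have : n * c ≤ n * (-1) := mul_le_mul_of_nonneg_left (by omega) hn.le
      linarith
    · exact h1
    · have : n * 1 ≤ n * c := mul_le_mul_of_nonneg_left (by omega) hn.le
      linarith
  rw [hc0, mul_zero] at hc
  linarith

private lemma emod_eq_of_dvd_sub {n a b : ℤ} (hn : 0 < n) (hb : 0 ≤ b) (hb' : b < n)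
    (h : n ∣ a - b) : a % n = b := by
  refine eq_of_dvd_sub hn (Int.emod_nonneg a hn.ne') (Int.emod_lt_of_pos a hn) hb hb' ?_
  have h2 : n ∣ a - a % n := Int.dvd_self_sub_of_emod_eq rfl
  have h3 : n ∣ _ := dvd_sub h h2
  convert h3 using 1
  ring

/-- The `k`-th power of the Verschiebung matrix `C_f` is the permutation-with-
`f`-powers matrix: `(C_f ^ k y)(i) = f^{l_i}(y(σ i))` with `σ i = (i - k) mod n`
and `l_i = (k - i + σ i)/n`; moreover `σ` is a bijection and `∑ l_i = k`. -/
theorem stmt_5 (M : Type*) [AddCommGroup M] (f : M →+ M) (n : ℕ) (hn : 0 < n)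
    (C : (Fin n → M) →+ (Fin n → M))
    (hC0 : ∀ y : Fin n → M, C y ⟨0, hn⟩ = f (y ⟨n - 1, Nat.sub_lt hn one_pos⟩))
    (hCi : ∀ (y : Fin n → M) (i : Fin n), 0 < (i : ℕ) →
      C y i = y ⟨(i : ℕ) - 1, lt_of_le_of_lt (Nat.sub_le _ _) i.isLt⟩)
    (k : ℕ) (σ : Fin n → Fin n) (l : Fin n → ℕ)
    (hσ : ∀ i : Fin n, ((σ i : ℕ) : ℤ) = (((i : ℕ) : ℤ) - (k : ℤ)) % (n : ℤ))
    (hl : ∀ i : Fin n, ((l i : ℕ) : ℤ) * (n : ℤ) =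
      (k : ℤ) - ((i : ℕ) : ℤ) + ((σ i : ℕ) : ℤ)) :
    (∀ (y : Fin n → M) (i : Fin n), (⇑C)^[k] y i = (⇑f)^[l i] (y (σ i))) ∧
    Function.Bijective σ ∧ (∑ i : Fin n, l i) = k := by
  have hn' : (0 : ℤ) < n := by exact_mod_cast hn
  have cancel : ∀ a b : ℕ, (a : ℤ) * n = (b : ℤ) * n → a = b := by
    intro a b h
    have := mul_right_cancel₀ hn'.ne' h
    exact_mod_cast this
  -- injectivity / bijectivity
  have hinj : Function.Injective σ := by
    intro i j h
    have hi := hσ i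
    have hj := hσ j
    rw [h, hj] at hi
    -- hi : (j - k) % n = (i - k) % n
    have d1 : (n : ℤ) ∣ ((j : ℕ) : ℤ) - (k : ℤ) - (((i : ℕ) : ℤ) - (k : ℤ)) % n :=
      Int.dvd_self_sub_of_emod_eq hi
    have d2 : (n : ℤ) ∣ ((i : ℕ) : ℤ) - (k : ℤ) - (((i : ℕ) : ℤ) - (k : ℤ)) % n :=
      Int.dvd_self_sub_of_emod_eq rfl
    have d3 : (n : ℤ) ∣ ((j : ℕ) : ℤ) - ((i : ℕ) : ℤ) := by
      have := dvd_sub d1 d2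
      simpa using this
    have hji : ((j : ℕ) : ℤ) = ((i : ℕ) : ℤ) := by
      refine eq_of_dvd_sub hn' (by positivity) (by exact_mod_cast j.isLt)
        (by positivity) (by exact_mod_cast i.isLt) d3
    have : (j : ℕ) = (i : ℕ) := by exact_mod_cast hji
    exact Fin.ext this.symm
  have hbij : Function.Bijective σ := Finite.injective_iff_bijective.mp hinj
  -- the main iteration formula, proved for all k, σ, l by induction on k
  have key : ∀ (k : ℕ) (σ : Fin n → Fin n) (l : Fin n → ℕ),
      (∀ i : Fin n, ((σ i : ℕ) : ℤ) = (((i : ℕ) : ℤ) - (k : ℤ)) % (n : ℤ)) →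
      (∀ i : Fin n, ((l i : ℕ) : ℤ) * (n : ℤ) =
        (k : ℤ) - ((i : ℕ) : ℤ) + ((σ i : ℕ) : ℤ)) →
      ∀ (y : Fin n → M) (i : Fin n), (⇑C)^[k] y i = (⇑f)^[l i] (y (σ i)) := by
    intro k
    induction k with
    | zero =>
      intro σ l hσ hl y i
      have hσi : σ i = i := by
        have h := hσ i
        rw [show (((i : ℕ) : ℤ) - ((0 : ℕ) : ℤ)) = ((i : ℕ) : ℤ) by push_cast; ring,
          Int.emod_eq_of_lt (by positivity) (by exact_mod_cast i.isLt)] at h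
        exact Fin.ext (by exact_mod_cast h)
      have hli : l i = 0 := by
        apply cancel
        rw [hl i, hσi]
        push_cast
        ring
      simp [hσi, hli]
    | succ k ih =>
      intro σ l hσ hl y i
      have hmem : ∀ a : ℤ, 0 ≤ a % n ∧ a % n < n :=
        fun a => ⟨Int.emod_nonneg a hn'.ne', Int.emod_lt_of_pos a hn'⟩
      set σ' : Fin n → Fin n := fun j =>
        ⟨((((j : ℕ) : ℤ) - (k : ℤ)) % n).toNat, by
          have := hmem (((j : ℕ) : ℤ) - (k : ℤ)); omega⟩ with hσ'def
      have hσ' : ∀ j : Fin n, ((σ' j : ℕ) : ℤ) = (((j : ℕ) : ℤ) - (k : ℤ)) % n :=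
        fun j => Int.toNat_of_nonneg (hmem _).1
      have hdvd : ∀ j : Fin n, (n : ℤ) ∣ ((k : ℤ) - ((j : ℕ) : ℤ) + ((σ' j : ℕ) : ℤ)) := by
        intro j
        have d2 : (n : ℤ) ∣ (((j : ℕ) : ℤ) - (k : ℤ)) - ((σ' j : ℕ) : ℤ) := by
          rw [hσ' j]
          exact Int.dvd_self_sub_of_emod_eq rfl
        have h3 : (n : ℤ) ∣ _ := dvd_neg.mpr d2
        convert h3 using 1
        ring
      have hnng : ∀ j : Fin n, 0 ≤ (k : ℤ) - ((j : ℕ) : ℤ) + ((σ' j : ℕ) : ℤ) := by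
        intro j
        rcases hdvd j with ⟨c, hc⟩
        have hj : ((j : ℕ) : ℤ) < n := by exact_mod_cast j.isLt
        have h0 : (0 : ℤ) ≤ ((σ' j : ℕ) : ℤ) := by positivity
        have hk0 : (0 : ℤ) ≤ (k : ℤ) := by positivity
        have hc0 : 0 ≤ c := by
          by_contra hcc
          push_neg at hcc
          have : (n : ℤ) * c ≤ n * (-1) := mul_le_mul_of_nonneg_left (by omega) hn'.le
          linarith
        have : 0 ≤ (n : ℤ) * c := mul_nonneg hn'.le hc0
        linarith
      set l' : Fin n → ℕ := fun j =>
        (((k : ℤ) - ((j : ℕ) : ℤ) + ((σ' j : ℕ) : ℤ)) / n).toNat with hl'def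
      have hl' : ∀ j : Fin n, ((l' j : ℕ) : ℤ) * n =
          (k : ℤ) - ((j : ℕ) : ℤ) + ((σ' j : ℕ) : ℤ) := by
        intro j
        have hq : (0 : ℤ) ≤ ((k : ℤ) - ((j : ℕ) : ℤ) + ((σ' j : ℕ) : ℤ)) / n :=
          Int.ediv_nonneg (hnng j) hn'.le
        simp only [hl'def]
        rw [Int.toNat_of_nonneg hq]
        exact Int.ediv_mul_cancel (hdvd j)
      have hIH := ih σ' l' hσ' hl'
      rw [Function.iterate_succ_apply, hIH (C y) i]
      by_cases h0 : (σ' i : ℕ) = 0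
      · have e1 : σ' i = ⟨0, hn⟩ := Fin.ext h0
        rw [e1, hC0]
        -- σ i = n - 1
        have hd0 : (n : ℤ) ∣ ((i : ℕ) : ℤ) - (k : ℤ) := by
          apply Int.dvd_of_emod_eq_zero
          rw [← hσ' i, h0]
          simp
        have hσi : ((σ i : ℕ) : ℤ) = (n : ℤ) - 1 := by
          rw [hσ i]
          apply emod_eq_of_dvd_sub hn' (by linarith) (by linarith)
          have h4 : (n : ℤ) ∣ (((i : ℕ) : ℤ) - (k : ℤ)) - n := dvd_sub hd0 dvd_rfl
          convert h4 using 1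
          push_cast
          ring
        have e2 : σ i = ⟨n - 1, Nat.sub_lt hn one_pos⟩ := by
          apply Fin.ext
          have : (σ i : ℕ) = n - 1 := by omega
          simpa using this
        have hli : l i = l' i + 1 := by
          apply cancel
          have h1 := hl i
          have h2 := hl' i
          rw [h0] at h2
          push_cast at h1 h2 ⊢
          rw [hσi] at h1
          linarith
        rw [e2, hli, Function.iterate_succ_apply]
      · have hpos : 0 < (σ' i : ℕ) := Nat.pos_of_ne_zero h0
        rw [hCi y (σ' i) hpos]
        have hσi : ((σ i : ℕ) : ℤ) = ((σ' i : ℕ) : ℤ) - 1 := by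
          have hlt : ((σ' i : ℕ) : ℤ) < n := by exact_mod_cast (σ' i).isLt
          have hge : (1 : ℤ) ≤ ((σ' i : ℕ) : ℤ) := by exact_mod_cast hpos
          rw [hσ i]
          apply emod_eq_of_dvd_sub hn' (by linarith) (by linarith)
          have d2 : (n : ℤ) ∣ (((i : ℕ) : ℤ) - (k : ℤ)) - ((σ' i : ℕ) : ℤ) := by
            rw [hσ' i]
            exact Int.dvd_self_sub_of_emod_eq rfl
          convert d2 using 1
          push_cast
          ring
        have e2 : σ i = ⟨(σ' i : ℕ) - 1, lt_of_le_of_lt (Nat.sub_le _ _) (σ' i).isLt⟩ := by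
          apply Fin.ext
          show (σ i : ℕ) = (σ' i : ℕ) - 1
          omega
        have hli : l i = l' i := by
          apply cancel
          rw [hl i, hl' i]
          push_cast
          rw [hσi]
          push_cast
          ring
        rw [e2, hli]
  refine ⟨key k σ l hσ hl, hbij, ?_⟩
  -- the sum
  have hsumσ : ∑ i : Fin n, ((σ i : ℕ) : ℤ) = ∑ i : Fin n, ((i : ℕ) : ℤ) :=
    hbij.sum_comp fun j => ((j : ℕ) : ℤ)
  apply cancel
  calc ((∑ i : Fin n, l i : ℕ) : ℤ) * n = ∑ i : Fin n, ((l i : ℕ) : ℤ) * n := by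
        push_cast; rw [Finset.sum_mul]
    _ = ∑ i : Fin n, ((k : ℤ) - ((i : ℕ) : ℤ) + ((σ i : ℕ) : ℤ)) :=
        Finset.sum_congr rfl fun i _ => hl i
    _ = (∑ i : Fin n, (k : ℤ)) - (∑ i : Fin n, ((i : ℕ) : ℤ))
        + ∑ i : Fin n, ((σ i : ℕ) : ℤ) := by
        rw [Finset.sum_add_distrib, Finset.sum_sub_distrib]
    _ = (k : ℤ) * n := by
        rw [hsumσ]
        simp [Finset.sum_const, Finset.card_univ, mul_comm]
end

section
/- Fix a prime p and let M be the abelian group of finitely supported functions from the positive integers to 𝔽_p = ℤ/p, with standard basis vectors δ_m for m ≥ 1. For each n ≥ 1 let V_n : M → M be the 𝔽_p-linear map determined by V_n(δ_m) = n·δ_{n·m} for all m ≥ 1. Then there is no finite subset S of M such that the smallest additive subgroup of M containing S and stable under V_n for every n ≥ 1 is all of M. -/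
lemma stmt7_V_one {p : ℕ} (V : ℕ+ → (ℕ+ →₀ ZMod p) →ₗ[ZMod p] (ℕ+ →₀ ZMod p))
    (hV : ∀ n m : ℕ+, V n (Finsupp.single m 1) =
      ((n : ℕ) : ZMod p) • Finsupp.single (n * m) 1) (x : ℕ+ →₀ ZMod p) :
    V 1 x = x := by
  induction x using Finsupp.induction with
  | zero => simp
  | single_add m c f _ _ ih =>
    have h1 : Finsupp.single m c = c • Finsupp.single m (1 : ZMod p) := by
      simp [Finsupp.smul_single]
    rw [map_add, ih, h1, map_smul, hV]
    simp

/-- Combinatorial form of the second half of Corollary 1.3: with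
`V_n (δ_m) = n · δ_{n·m}`, no finite subset of `⊕_{m ≥ 1} 𝔽_p` generates the
whole group as an additive subgroup stable under all the `V_n`. -/
theorem stmt_7 (p : ℕ) (hp : p.Prime)
    (V : ℕ+ → (ℕ+ →₀ ZMod p) →ₗ[ZMod p] (ℕ+ →₀ ZMod p))
    (hV : ∀ n m : ℕ+, V n (Finsupp.single m 1) =
      ((n : ℕ) : ZMod p) • Finsupp.single (n * m) 1) :
    ¬ ∃ S : Finset (ℕ+ →₀ ZMod p), ∀ T : AddSubgroup (ℕ+ →₀ ZMod p),
      (↑S : Set (ℕ+ →₀ ZMod p)) ⊆ ↑T →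
      (∀ (n : ℕ+) (x : ℕ+ →₀ ZMod p), x ∈ T → V n x ∈ T) →
      ∀ x : ℕ+ →₀ ZMod p, x ∈ T := by
  rintro ⟨S, hS⟩
  -- choose k with p^k bigger than every support element of S
  set N : ℕ := S.sup fun s => s.support.sup fun m => (m : ℕ) with hN
  have hp2 : 2 ≤ p := hp.two_le
  have hpk : N < p ^ N := lt_of_lt_of_le (Nat.lt_two_pow_self (n := N))
    (Nat.pow_le_pow_left hp2 N)
  have hqpos : 0 < p ^ N := pow_pos hp.pos N
  set q : ℕ+ := ⟨p ^ N, hqpos⟩ with hq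
  -- key: for n ≠ 1, evaluating V n x at q gives 0
  have key : ∀ (n : ℕ+), n ≠ 1 → ∀ x : ℕ+ →₀ ZMod p, (V n x) q = 0 := by
    intro n hn x
    induction x using Finsupp.induction with
    | zero => simp
    | single_add m c f _ _ ih =>
      have h1 : Finsupp.single m c = c • Finsupp.single m (1 : ZMod p) := by
        simp [Finsupp.smul_single]
      rw [map_add, h1, map_smul, hV, Finsupp.add_apply, ih, add_zero]
      by_cases hnm : n * m = q
      · have hdvd : (n : ℕ) ∣ p ^ N := by
          refine ⟨(m : ℕ), ?_⟩
          have := congrArg (fun t : ℕ+ => (t : ℕ)) hnm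
          simpa [hq] using this.symm
        obtain ⟨j, hj, hjn⟩ := (Nat.dvd_prime_pow hp).mp hdvd
        have hj1 : 1 ≤ j := by
          rcases Nat.eq_zero_or_pos j with h0 | h0
          · exfalso; apply hn
            have : (n : ℕ) = 1 := by simp [hjn, h0]
            exact PNat.coe_eq_one_iff.mp this
          · exact h0
        have : ((n : ℕ) : ZMod p) = 0 := by
          rw [hjn]
          push_cast
          rw [ZMod.natCast_self]
          exact zero_pow (by omega)
        simp [this]
      · simp [Finsupp.single_apply, hnm]
  -- the subgroup of elements vanishing at q
  set T : AddSubgroup (ℕ+ →₀ ZMod p) :=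
    { carrier := {x | x q = 0}
      add_mem' := by intro a b ha hb; simp only [Set.mem_setOf_eq, Finsupp.add_apply] at *
                     rw [ha, hb, add_zero]
      zero_mem' := by simp
      neg_mem' := by intro a ha; simp only [Set.mem_setOf_eq, Finsupp.neg_apply] at *
                     rw [ha, neg_zero] } with hT
  have hmemT : ∀ x : ℕ+ →₀ ZMod p, x ∈ T ↔ x q = 0 := fun x => Iff.rfl
  have hsub : (↑S : Set (ℕ+ →₀ ZMod p)) ⊆ ↑T := by
    intro s hs
    rw [SetLike.mem_coe, hmemT]
    by_contra h
    have hmem : q ∈ s.support := Finsupp.mem_support_iff.mpr h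
    have h1 : (q : ℕ) ≤ s.support.sup fun m => (m : ℕ) :=
      Finset.le_sup (f := fun m : ℕ+ => (m : ℕ)) hmem
    have h2 : (s.support.sup fun m => (m : ℕ)) ≤ N :=
      Finset.le_sup (f := fun s : (ℕ+ →₀ ZMod p) => s.support.sup fun m => (m : ℕ)) hs
    have h3 : (q : ℕ) ≤ N := le_trans h1 h2
    have h4 : (q : ℕ) = p ^ N := rfl
    omega
  have hstab : ∀ (n : ℕ+) (x : ℕ+ →₀ ZMod p), x ∈ T → V n x ∈ T := by
    intro n x hx
    by_cases hn : n = 1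
    · rw [hn, stmt7_V_one V hV]; exact hx
    · rw [hmemT]; exact key n hn x
  haveI : Fact p.Prime := ⟨hp⟩
  have hbad := hS T hsub hstab (Finsupp.single q 1)
  rw [hmemT] at hbad
  simp only [Finsupp.single_apply, if_pos rfl] at hbad
  exact one_ne_zero hbad
end

section
/- Fix a prime p and let M be the abelian group of finitely supported functions from ℤ to 𝔽_p = ℤ/p, with standard basis vectors δ_m for m ∈ ℤ. For each n ≥ 1 let V_n : M → M be the 𝔽_p-linear map determined by V_n(δ_m) = n·δ_{n·m} for all m ∈ ℤ. Then there is no finite subset S of M such that the smallest additive subgroup of M containing S and stable under V_n for every n ≥ 1 is all of M. -/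
/-!
For `d = p ^ K`, the functions vanishing at every nonzero multiple of `d` form a subgroup that is
stable under every `V_n`: if `p ∣ n` then `V_n = 0` in characteristic `p`, and otherwise `n` is a
unit modulo `d`, so `n * m` is a multiple of `d` only when `m` is. Once `p ^ K` exceeds every
`|m|` in the supports of a finite set `S`, this subgroup contains `S` but not `δ_{p ^ K}`.
-/

open Finsupp

theorem Finsupp.linearMap_eq_smul_lmapDomain {R α β : Type*} [CommSemiring R]
    (f : (α →₀ R) →ₗ[R] (β →₀ R)) (c : R) (g : α → β)
    (hf : ∀ a, f (single a 1) = c • single (g a) 1) :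
    f = c • lmapDomain R R g :=
  lhom_ext' fun a => LinearMap.ext_ring <| by simp [hf]

section VanishingOnMultiples

variable (R : Type*) [Semiring R]

def vanishingOnMultiples (d : ℕ) : Submodule R (ℤ →₀ R) where
  carrier := {x | ∀ m : ℤ, m ≠ 0 → (d : ℤ) ∣ m → x m = 0}
  zero_mem' := fun _ _ _ => rfl
  add_mem' := fun hx hy m hm hd => by simp [hx m hm hd, hy m hm hd]
  smul_mem' := fun c x hx m hm hd => by simp [hx m hm hd]

variable {R}

theorem mem_vanishingOnMultiples_of_natAbs_lt {d : ℕ} {x : ℤ →₀ R}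
    (hx : ∀ m ∈ x.support, m.natAbs < d) : x ∈ vanishingOnMultiples R d := by
  intro m hm hd
  by_contra hxm
  have hdm : d ≤ m.natAbs := Nat.le_of_dvd (Int.natAbs_pos.2 hm) (Int.natCast_dvd.1 hd)
  exact (hx m (mem_support_iff.2 hxm)).not_ge hdm

theorem single_notMem_vanishingOnMultiples [Nontrivial R] {d : ℕ} (hd : d ≠ 0) :
    single (d : ℤ) (1 : R) ∉ vanishingOnMultiples R d := fun h => by
  simpa using h d (by exact_mod_cast hd) dvd_rfl

theorem mapDomain_mul_mem_vanishingOnMultiples {d n : ℕ} (hn : n ≠ 0) (hnd : n.Coprime d)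
    {x : ℤ →₀ R} (hx : x ∈ vanishingOnMultiples R d) :
    mapDomain (fun m => (n : ℤ) * m) x ∈ vanishingOnMultiples R d := by
  intro k hk hdk
  by_cases hrange : k ∈ Set.range fun m => (n : ℤ) * m
  · obtain ⟨m, rfl⟩ := hrange
    rw [mapDomain_apply (mul_right_injective₀ (by exact_mod_cast hn))]
    refine hx m (right_ne_zero_of_mul hk) (Int.natCast_dvd.2 ?_)
    rw [Int.natCast_dvd, Int.natAbs_mul, Int.natAbs_natCast] at hdk
    exact hnd.symm.dvd_of_dvd_mul_left hdk
  · exact mapDomain_of_notMem_range x k hrange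

end VanishingOnMultiples

/-- Combinatorial form of the second half of Corollary 6.6: with
`V_n (δ_m) = n · δ_{n·m}` on `⊕_{m ∈ ℤ} 𝔽_p`, no finite subset generates the
whole group as an additive subgroup stable under all the `V_n`. -/
theorem stmt_9 (p : ℕ) (hp : p.Prime)
    (V : ℕ+ → (ℤ →₀ ZMod p) →ₗ[ZMod p] (ℤ →₀ ZMod p))
    (hV : ∀ (n : ℕ+) (m : ℤ), V n (Finsupp.single m 1) =
      ((n : ℕ) : ZMod p) • Finsupp.single ((n : ℤ) * m) 1) :
    ¬ ∃ S : Finset (ℤ →₀ ZMod p), ∀ T : AddSubgroup (ℤ →₀ ZMod p),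
      (↑S : Set (ℤ →₀ ZMod p)) ⊆ ↑T →
      (∀ (n : ℕ+) (x : ℤ →₀ ZMod p), x ∈ T → V n x ∈ T) →
      ∀ x : ℤ →₀ ZMod p, x ∈ T := by
  have : Fact p.Prime := ⟨hp⟩
  rintro ⟨S, hS⟩
  set N := S.sup fun s => s.support.sup Int.natAbs
  have hN : N < p ^ N := Nat.lt_pow_self hp.one_lt
  set T := vanishingOnMultiples (ZMod p) (p ^ N)
  refine single_notMem_vanishingOnMultiples (pow_ne_zero N hp.ne_zero)
    (hS T.toAddSubgroup (fun s hs => ?_) (fun n x hx => ?_) _)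
  · refine mem_vanishingOnMultiples_of_natAbs_lt fun m hm => hN.trans_le' ?_
    exact Finset.le_sup_of_le hs (Finset.le_sup hm)
  · rw [Submodule.mem_toAddSubgroup, linearMap_eq_smul_lmapDomain (V n) _ _ (hV n),
      LinearMap.smul_apply, lmapDomain_apply]
    by_cases hpn : p ∣ (n : ℕ)
    · rw [(ZMod.natCast_eq_zero_iff _ _).2 hpn, zero_smul]
      exact T.zero_mem
    · exact T.smul_mem _ <| mapDomain_mul_mem_vanishingOnMultiples n.ne_zero
        ((hp.coprime_iff_not_dvd.2 hpn).pow_left N).symm hx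
end

section
/- Fix a prime p and let M be the abelian group of finitely supported functions from the positive integers to 𝔽_p = ℤ/p, with standard basis vectors δ_m for m ≥ 1, and for each n ≥ 1 let V_n : M → M be the 𝔽_p-linear map determined by V_n(δ_m) = n·δ_{n·m} for all m ≥ 1. Suppose (F_n)_{n≥1} is any family of additive endomorphisms of M satisfying: F_1 = id; F_n ∘ F_m = F_{n·m} for all m, n ≥ 1; F_n ∘ V_n = n·id for all n ≥ 1; F_n ∘ V_m = V_m ∘ F_n whenever gcd(m, n) = 1; and for every x ∈ M there exists N with F_n(x) = 0 for all n ≥ N. Then there is no finite subset S of M such that the smallest additive subgroup of M containing S and stable under F_n and V_n for every n ≥ 1 is all of M. -/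
/-- Combinatorial form of Corollary 6.7: with `V_n (δ_m) = n · δ_{n·m}` and any
family of Frobenius operators `F_n` satisfying the identities of Proposition 5.1
and eventual vanishing on each element, no finite subset of `⊕_{m ≥ 1} 𝔽_p`
generates the whole group as an additive subgroup stable under all `F_n` and
`V_n`. -/
theorem stmt_10 (p : ℕ) (hp : p.Prime)
    (V : ℕ+ → (ℕ+ →₀ ZMod p) →ₗ[ZMod p] (ℕ+ →₀ ZMod p))
    (hV : ∀ n m : ℕ+, V n (Finsupp.single m 1) =
      ((n : ℕ) : ZMod p) • Finsupp.single (n * m) 1)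
    (F : ℕ+ → (ℕ+ →₀ ZMod p) →+ (ℕ+ →₀ ZMod p))
    (hF1 : ∀ x, F 1 x = x)
    (hFmul : ∀ m n : ℕ+, ∀ x, F n (F m x) = F (n * m) x)
    (hFV : ∀ n : ℕ+, ∀ x, F n (V n x) = (n : ℕ) • x)
    (hcomm : ∀ m n : ℕ+, Nat.Coprime (m : ℕ) (n : ℕ) →
      ∀ x, F n (V m x) = V m (F n x))
    (hvan : ∀ x, ∃ N : ℕ+, ∀ n : ℕ+, N ≤ n → F n x = 0) :
    ¬ ∃ S : Finset (ℕ+ →₀ ZMod p), ∀ T : AddSubgroup (ℕ+ →₀ ZMod p),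
      (↑S : Set (ℕ+ →₀ ZMod p)) ⊆ ↑T →
      (∀ (n : ℕ+) (x : ℕ+ →₀ ZMod p), x ∈ T → V n x ∈ T) →
      (∀ (n : ℕ+) (x : ℕ+ →₀ ZMod p), x ∈ T → F n x ∈ T) →
      ∀ x : ℕ+ →₀ ZMod p, x ∈ T := by
  rintro ⟨S, hS⟩
  haveI : Fact p.Prime := ⟨hp⟩
  -- V on general singles
  have hVs : ∀ (n m : ℕ+) (c : ZMod p),
      V n (Finsupp.single m c) = Finsupp.single (n * m) (((n : ℕ) : ZMod p) * c) := by
    intro n m c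
    have h1 : Finsupp.single m c = c • Finsupp.single m (1 : ZMod p) := by
      rw [Finsupp.smul_single', mul_one]
    rw [h1, map_smul, hV, smul_smul, Finsupp.smul_single', mul_one, mul_comm c]
  -- V multiplicative
  have hVmul : ∀ (n m : ℕ+) (x), V n (V m x) = V (n * m) x := by
    intro n m x
    induction x using Finsupp.induction with
    | zero => simp
    | single_add a c f _ _ ih =>
      rw [map_add, map_add, map_add, ih, hVs, hVs, hVs]
      congr 2
      · rw [mul_assoc]
      · push_cast; ring
  -- V 1 = id
  have hV1 : ∀ x, V 1 x = x := by
    intro x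
    induction x using Finsupp.induction with
    | zero => simp
    | single_add a c f _ _ ih =>
      rw [map_add, ih, hVs, one_mul]
      norm_num
  -- bound on supports
  set Nf : (ℕ+ →₀ ZMod p) → ℕ+ := fun s => (hvan s).choose with hNf
  set N₀ : ℕ := S.sup (fun s => ((Nf s : ℕ))) with hN₀
  set B : ℕ := S.sup (fun s => (Finset.range (N₀ + 1)).sup
      (fun i => ((F (⟨i + 1, i.succ_pos⟩ : ℕ+) s).support.sup (fun m => (m : ℕ))) + 1)) with hB
  have hbound : ∀ s ∈ S, ∀ (a m : ℕ+), B ≤ (m : ℕ) → (F a s) m = 0 := by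
    intro s hs a m hm
    by_cases hge : Nf s ≤ a
    · rw [(hvan s).choose_spec a hge]; rfl
    · push_neg at hge
      by_contra hne
      have hmem : m ∈ (F a s).support := Finsupp.mem_support_iff.mpr hne
      have h1 : (m : ℕ) ≤ (F a s).support.sup (fun m => (m : ℕ)) :=
        Finset.le_sup (s := (F a s).support) (f := fun x : ℕ+ => (x : ℕ)) hmem
      have ha1 : ((a : ℕ) - 1) + 1 = (a : ℕ) := Nat.succ_pred_eq_of_pos a.pos
      have haeq : (⟨((a : ℕ) - 1) + 1, (((a:ℕ) - 1)).succ_pos⟩ : ℕ+) = a := by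
        exact PNat.coe_injective (by simpa using ha1)
      have hmem2 : (a : ℕ) - 1 ∈ Finset.range (N₀ + 1) := by
        have h3 : (Nf s : ℕ) ≤ N₀ := Finset.le_sup (f := fun s => ((Nf s : ℕ))) hs
        have h4 : (a : ℕ) < (Nf s : ℕ) := hge
        simp only [Finset.mem_range]; omega
      have h2 : ((F (⟨((a : ℕ) - 1) + 1, (((a:ℕ) - 1)).succ_pos⟩ : ℕ+) s).support.sup
          (fun m => (m : ℕ))) + 1 ≤ (Finset.range (N₀ + 1)).sup
          (fun i => ((F (⟨i + 1, i.succ_pos⟩ : ℕ+) s).support.sup (fun m => (m : ℕ))) + 1) :=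
        Finset.le_sup (f := fun i => ((F (⟨i + 1, i.succ_pos⟩ : ℕ+) s).support.sup (fun m => (m : ℕ))) + 1) hmem2
      rw [haeq] at h2
      have h5 : (Finset.range (N₀ + 1)).sup
          (fun i => ((F (⟨i + 1, i.succ_pos⟩ : ℕ+) s).support.sup (fun m => (m : ℕ))) + 1) ≤ B :=
        Finset.le_sup (f := fun s => (Finset.range (N₀ + 1)).sup
          (fun i => ((F (⟨i + 1, i.succ_pos⟩ : ℕ+) s).support.sup (fun m => (m : ℕ))) + 1)) hs
      omega
  -- the special index
  set π : ℕ+ := ⟨p, hp.pos⟩ with hπ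
  set j : ℕ+ := π ^ B with hj
  have hjcoe : (j : ℕ) = p ^ B := by rw [hj, PNat.pow_coe]; rfl
  have hBj : B < p ^ B := Nat.lt_pow_self hp.one_lt (n := B)
  -- evaluation at j vanishes on V b x for bounded x
  have heval : ∀ (b : ℕ+) (x : ℕ+ →₀ ZMod p),
      (∀ m : ℕ+, B ≤ (m : ℕ) → x m = 0) → (V b x) j = 0 := by
    intro b x
    induction x using Finsupp.induction with
    | zero => intro _; simp
    | single_add a c f haf hc ih =>
      intro hsupp
      have hfa : f a = 0 := Finsupp.notMem_support_iff.mp haf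
      have ha' : (a : ℕ) < B := by
        by_contra h
        push_neg at h
        have h0 := hsupp a h
        rw [Finsupp.add_apply, Finsupp.single_eq_same, hfa, add_zero] at h0
        exact hc h0
      have hf : ∀ m : ℕ+, B ≤ (m : ℕ) → f m = 0 := by
        intro m hm
        have h0 := hsupp m hm
        have hma : a ≠ m := by rintro rfl; omega
        rwa [Finsupp.add_apply, Finsupp.single_apply, if_neg hma, zero_add] at h0
      rw [map_add, Finsupp.add_apply, ih hf, add_zero, hVs, Finsupp.single_apply]
      split_ifs with h
      · have hba : (b : ℕ) * (a : ℕ) = p ^ B := by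
          have := congrArg (fun t : ℕ+ => (t : ℕ)) h
          simpa [PNat.mul_coe, hjcoe] using this
        by_cases hpb : p ∣ (b : ℕ)
        · have hz : ((b : ℕ) : ZMod p) = 0 := (ZMod.natCast_eq_zero_iff _ _).mpr hpb
          rw [hz, zero_mul]
        · exfalso
          have hcop : Nat.Coprime (p ^ B) (b : ℕ) :=
            Nat.Coprime.pow_left _ ((Nat.Prime.coprime_iff_not_dvd hp).mpr hpb)
          have hdvd : p ^ B ∣ (b : ℕ) * (a : ℕ) := hba ▸ dvd_refl _
          have hdvd2 : p ^ B ∣ (a : ℕ) := hcop.dvd_of_dvd_mul_left hdvd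
          have := Nat.le_of_dvd a.pos hdvd2
          omega
      · rfl
  -- the generated subgroup
  set W : Set (ℕ+ →₀ ZMod p) := {y | ∃ (a b : ℕ+), ∃ s ∈ S, y = V b (F a s)} with hW
  set T : AddSubgroup (ℕ+ →₀ ZMod p) := AddSubgroup.closure W with hT
  have hWT : W ⊆ ↑T := AddSubgroup.subset_closure
  have hSsub : (↑S : Set (ℕ+ →₀ ZMod p)) ⊆ ↑T := by
    intro s hs
    apply hWT
    exact ⟨1, 1, s, hs, by rw [hF1, hV1]⟩
  have hVstab : ∀ (n : ℕ+) (x : ℕ+ →₀ ZMod p), x ∈ T → V n x ∈ T := by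
    intro n x hx
    induction hx using AddSubgroup.closure_induction with
    | mem y hy =>
      obtain ⟨a, b, s, hs, rfl⟩ := hy
      exact hWT ⟨a, n * b, s, hs, hVmul n b _⟩
    | zero => rw [map_zero]; exact T.zero_mem
    | add y z _ _ hy hz => rw [map_add]; exact T.add_mem hy hz
    | neg y _ hy => rw [map_neg]; exact T.neg_mem hy
  have hFstab : ∀ (n : ℕ+) (x : ℕ+ →₀ ZMod p), x ∈ T → F n x ∈ T := by
    intro n x hx
    induction hx using AddSubgroup.closure_induction with
    | mem y hy =>
      obtain ⟨a, b, s, hs, rfl⟩ := hy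
      -- factor gcd
      set dn : ℕ := Nat.gcd (n : ℕ) (b : ℕ) with hdn
      have hdpos : 0 < dn := Nat.gcd_pos_of_pos_left _ n.pos
      set d : ℕ+ := ⟨dn, hdpos⟩ with hd
      have hdn' : (d : ℕ) = dn := rfl
      have hdvdn : d ∣ n := PNat.dvd_iff.mpr (Nat.gcd_dvd_left _ _)
      have hdvdb : d ∣ b := PNat.dvd_iff.mpr (Nat.gcd_dvd_right _ _)
      obtain ⟨n₁, hn₁⟩ := hdvdn
      obtain ⟨b₁, hb₁⟩ := hdvdb
      have hcop : Nat.Coprime (b₁ : ℕ) (n₁ : ℕ) := by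
        have h1 : ((n : ℕ) / dn) = (n₁ : ℕ) := by
          rw [hn₁, PNat.mul_coe, hdn', Nat.mul_div_cancel_left _ hdpos]
        have h2 : ((b : ℕ) / dn) = (b₁ : ℕ) := by
          rw [hb₁, PNat.mul_coe, hdn', Nat.mul_div_cancel_left _ hdpos]
        have := Nat.coprime_div_gcd_div_gcd (m := (n : ℕ)) (n := (b : ℕ)) hdpos
        rw [← hdn, h1, h2] at this
        exact this.symm
      have key : F n (V b (F a s)) = (d : ℕ) • V b₁ (F (n₁ * a) s) := by
        have e1 : V b (F a s) = V d (V b₁ (F a s)) := by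
          rw [hVmul, ← hb₁]
        have e2 : F n (V d (V b₁ (F a s))) = F n₁ (F d (V d (V b₁ (F a s)))) := by
          rw [hFmul, hn₁, mul_comm]
        rw [e1, e2, hFV, AddMonoidHom.map_nsmul, hcomm b₁ n₁ hcop, hFmul]
      rw [key]
      exact AddSubgroup.nsmul_mem T (hWT ⟨n₁ * a, b₁, s, hs, rfl⟩) _
    | zero => rw [map_zero]; exact T.zero_mem
    | add y z _ _ hy hz => rw [map_add]; exact T.add_mem hy hz
    | neg y _ hy => rw [map_neg]; exact T.neg_mem hy
  -- T lies in the kernel of evaluation at j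
  have hTj : ∀ y ∈ T, y j = 0 := by
    have hle : T ≤ (Finsupp.applyAddHom (M := ZMod p) j).ker := by
      rw [hT]
      apply (AddSubgroup.closure_le _).mpr
      rintro y ⟨a, b, s, hs, rfl⟩
      exact heval b (F a s) (fun m hm => hbound s hs a m hm)
    intro y hy
    exact AddMonoidHom.mem_ker.mp (hle hy)
  have hfull := hS T hSsub hVstab hFstab (Finsupp.single j 1)
  have := hTj _ hfull
  rw [Finsupp.single_eq_same] at this
  exact one_ne_zero this
end
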